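/- Let r ≥ 3, d ≥ 3, let H be an r-uniform supertree with a vertex u, and let 2 ≤ i ≤ d. Let P_d^r(v_i,u)H be the hypergraph obtained from the disjoint union of the loose path P_d^r and H by identifying the joint vertex v_i of the path with the vertex u of H. Then φ(P_d^r(v_i,u)H, x) = φ(P_d^r, x)·φ(H−u, x) − x^{2r−4}·φ(P_{i−2}^r, x)·φ(P_{d−i}^r, x)·Σ_{e ∈ E_u(H)} φ(H − V(e), x), where the sum runs over all edges e of H containing u. -/

import Mathlib

open Classical

noncomputable section

/-- A finite hypergraph: a finite vertex set together with a finite set of edges,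
each edge being a finite set of vertices. -/
structure FinHypergraph (α : Type*) where
  verts : Finset α
  edges : Finset (Finset α)

namespace FinHypergraph

variable {α : Type*}

/-- Every edge of `H` is a subset of the vertex set of `H`. -/
def WellFormed (H : FinHypergraph α) : Prop := ∀ e ∈ H.edges, e ⊆ H.verts

/-- `H` is `r`-uniform: every edge has exactly `r` vertices. -/
def Uniform (H : FinHypergraph α) (r : ℕ) : Prop := ∀ e ∈ H.edges, e.card = r

/-- A set of edges is a matching if its members are pairwise disjoint. -/
def IsMatchingSet (M : Finset (Finset α)) : Prop :=
  ∀ e ∈ M, ∀ f ∈ M, e ≠ f → Disjoint e f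

/-- `m(H,k)`: the number of matchings of `H` consisting of exactly `k` edges. -/
noncomputable def matchCount (H : FinHypergraph α) (k : ℕ) : ℕ :=
  (H.edges.powerset.filter (fun M => M.card = k ∧ IsMatchingSet M)).card

/-- The matching polynomial `φ(H,x) = Σ_k (-1)^k m(H,k) x^(n - r·k)` of an
`r`-uniform hypergraph `H` with `n` vertices, evaluated at a real number `x`. -/
noncomputable def matchPoly (H : FinHypergraph α) (r : ℕ) (x : ℝ) : ℝ :=
  ∑ k ∈ Finset.range (H.verts.card + 1),
    (-1 : ℝ) ^ k * (H.matchCount k : ℝ) * x ^ (H.verts.card - r * k)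

/-- `H − S`: delete the vertices of `S` and all edges meeting `S`. -/
def removeVerts (H : FinHypergraph α) (S : Finset α) : FinHypergraph α :=
  ⟨H.verts \ S, H.edges.filter (fun e => Disjoint e S)⟩

/-- `H` is connected: nonempty vertex set, and any two vertices are linked by a chain of
vertices successively lying in a common edge. -/
def Connected (H : FinHypergraph α) : Prop :=
  H.verts.Nonempty ∧ ∀ u ∈ H.verts, ∀ v ∈ H.verts,
    Relation.ReflTransGen (fun a b => ∃ e ∈ H.edges, a ∈ e ∧ b ∈ e) u v

/-- `H` has a cycle: an alternating sequence `v_0 e_0 v_1 e_1 … v_{ℓ-1} e_{ℓ-1} v_0`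
(with `ℓ ≥ 2`) of distinct vertices and distinct edges such that consecutive vertices lie
in the intermediate edge. -/
def HasCycle (H : FinHypergraph α) : Prop :=
  ∃ (ℓ : ℕ) (v : ℕ → α) (e : ℕ → Finset α), 2 ≤ ℓ ∧
    Set.InjOn v (Set.Iio ℓ) ∧ Set.InjOn e (Set.Iio ℓ) ∧
    ∀ i < ℓ, e i ∈ H.edges ∧ v i ∈ e i ∧ v ((i + 1) % ℓ) ∈ e i

/-- An `r`-uniform supertree: a connected acyclic `r`-uniform hypergraph. -/
def IsSupertree (H : FinHypergraph α) (r : ℕ) : Prop :=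
  H.WellFormed ∧ H.Uniform r ∧ H.Connected ∧ ¬ H.HasCycle

/-- The edges of the `r`-uniform loose path of length `p` along the vertex labelling `w`:
the `i`-th edge consists of the `r` vertices `w (i*(r-1)), …, w ((i+1)*(r-1))`, so that
consecutive edges share exactly one vertex. -/
def loosePathEdges (r p : ℕ) (w : ℕ → α) : Finset (Finset α) :=
  (Finset.range p).image (fun i => (Finset.Icc (i * (r - 1)) ((i + 1) * (r - 1))).image w)

/-- `P` is an `r`-uniform loose path with `m` edges (`P_m^r`); for `m = 0` it is a single
vertex with no edge. -/
def IsLoosePath (r m : ℕ) (P : FinHypergraph α) : Prop :=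
  ∃ w : ℕ → α, Set.InjOn w (Set.Iic (m * (r - 1))) ∧
    P.verts = (Finset.Icc 0 (m * (r - 1))).image w ∧
    P.edges = loosePathEdges r m w

/-- `T'` is obtained from the disjoint union of the loose path `P_d^r` and `H` by
identifying the path vertex with label `c` with the vertex `u` of `H` (all other path
vertices being new). -/
def IsPathIdentify (r d c : ℕ) (H : FinHypergraph α) (u : α) (T' : FinHypergraph α) : Prop :=
  ∃ w : ℕ → α, Set.InjOn w (Set.Iic (d * (r - 1))) ∧ w c = u ∧
    (∀ t, t ≤ d * (r - 1) → t ≠ c → w t ∉ H.verts) ∧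
    T'.verts = H.verts ∪ (Finset.Icc 0 (d * (r - 1))).image w ∧
    T'.edges = H.edges ∪ loosePathEdges r d w

/-!
Split the matchings of the glued hypergraph `T` according to the edge of `H` through `u` that
they use, if any. Those using none are exactly the matchings of the disjoint union
`(H − u) ⊔ P_d`; those using `e ∈ E_u(H)` are `e` together with a matching of
`(H − V(e)) ⊔ (P_d − v_i)`. Matching polynomials multiply over disjoint unions and do not see
how the vertices are labelled, and `P_d − v_i` is `P_{i-2} ⊔ P_{d-i}` together with the
`2r − 4` inner vertices of the two path edges through `v_i`, now isolated.
-/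

variable {β : Type*}

theorem _root_.Set.InjOn.finset_image [DecidableEq β] {f : α → β} {s : Set α} (hf : Set.InjOn f s) :
    Set.InjOn (Finset.image f) {t | ↑t ⊆ s} := by
  intro t ht t' ht' h
  rw [← Finset.coe_inj]
  exact (hf.image_eq_image_iff ht ht').1 (by rw [← Finset.coe_image, h, Finset.coe_image])

theorem _root_.Finset.disjoint_image_iff_of_injOn [DecidableEq β] {f : α → β} {s t : Finset α}
    (hf : Set.InjOn f ↑(s ∪ t)) :
    Disjoint (s.image f) (t.image f) ↔ Disjoint s t := by
  rw [Finset.disjoint_iff_inter_eq_empty, Finset.disjoint_iff_inter_eq_empty,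
    ← Finset.image_inter_of_injOn s t (by rwa [← Finset.coe_union]), Finset.image_eq_empty]

@[ext]
theorem ext {G G' : FinHypergraph α} (hv : G.verts = G'.verts) (he : G.edges = G'.edges) :
    G = G' := by
  cases G; cases G'; congr

instance [DecidableEq α] : Union (FinHypergraph α) :=
  ⟨fun G₁ G₂ => ⟨G₁.verts ∪ G₂.verts, G₁.edges ∪ G₂.edges⟩⟩

@[simp] theorem union_verts [DecidableEq α] (G₁ G₂ : FinHypergraph α) :
    (G₁ ∪ G₂).verts = G₁.verts ∪ G₂.verts :=
  rfl

@[simp] theorem union_edges [DecidableEq α] (G₁ G₂ : FinHypergraph α) :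
    (G₁ ∪ G₂).edges = G₁.edges ∪ G₂.edges :=
  rfl

def deleteEdges (G : FinHypergraph α) (F : Finset (Finset α)) : FinHypergraph α :=
  ⟨G.verts, G.edges \ F⟩

def map [DecidableEq β] (f : α → β) (G : FinHypergraph α) : FinHypergraph β :=
  ⟨G.verts.image f, G.edges.image (Finset.image f)⟩

def edgeless (S : Finset α) : FinHypergraph α := ⟨S, ∅⟩

def matchings (G : FinHypergraph α) : Finset (Finset (Finset α)) :=
  G.edges.powerset.filter IsMatchingSet

theorem mem_matchings {G : FinHypergraph α} {M : Finset (Finset α)} :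
    M ∈ G.matchings ↔ M ⊆ G.edges ∧ IsMatchingSet M := by
  simp [matchings]

theorem IsMatchingSet.mono {M N : Finset (Finset α)} (h : IsMatchingSet M) (hNM : N ⊆ M) :
    IsMatchingSet N :=
  fun e he f hf hne => h e (hNM he) f (hNM hf) hne

theorem mem_removeVerts_verts {G : FinHypergraph α} {S : Finset α} {v : α} :
    v ∈ (G.removeVerts S).verts ↔ v ∈ G.verts ∧ v ∉ S :=
  Finset.mem_sdiff

theorem mem_removeVerts_edges {G : FinHypergraph α} {S e : Finset α} :
    e ∈ (G.removeVerts S).edges ↔ e ∈ G.edges ∧ Disjoint e S :=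
  Finset.mem_filter

theorem WellFormed.removeVerts {G : FinHypergraph α} (hG : G.WellFormed) (S : Finset α) :
    (G.removeVerts S).WellFormed := fun e he =>
  Finset.subset_sdiff.2 ⟨hG e (mem_removeVerts_edges.1 he).1, (mem_removeVerts_edges.1 he).2⟩

theorem Uniform.removeVerts {G : FinHypergraph α} {r : ℕ} (hG : G.Uniform r) (S : Finset α) :
    (G.removeVerts S).Uniform r := fun e he => hG e (mem_removeVerts_edges.1 he).1

theorem card_removeVerts_verts {G : FinHypergraph α} {S : Finset α} (hS : S ⊆ G.verts) :
    (G.removeVerts S).verts.card = G.verts.card - S.card :=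
  Finset.card_sdiff_of_subset hS

section MatchingSum

variable {G : FinHypergraph α} {r : ℕ}

theorem mul_card_le_of_mem_matchings (hwf : G.WellFormed) (hun : G.Uniform r)
    {M : Finset (Finset α)} (hM : M ∈ G.matchings) : r * M.card ≤ G.verts.card := by
  obtain ⟨hME, hMm⟩ := mem_matchings.1 hM
  calc r * M.card = ∑ e ∈ M, e.card := by
        rw [Finset.sum_congr rfl fun e he => hun e (hME he), Finset.sum_const, smul_eq_mul,
          mul_comm]
    _ = (M.biUnion id).card := (Finset.card_biUnion fun e he f hf hne => hMm e he f hf hne).symm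
    _ ≤ G.verts.card := Finset.card_le_card (Finset.biUnion_subset.2 fun e he => hwf e (hME he))

theorem matchPoly_eq_sum_matchings (hr : 1 ≤ r) (hwf : G.WellFormed) (hun : G.Uniform r)
    (x : ℝ) :
    G.matchPoly r x
      = ∑ M ∈ G.matchings, (-1 : ℝ) ^ M.card * x ^ (G.verts.card - r * M.card) := by
  have hmaps : ∀ M ∈ G.matchings, M.card ∈ Finset.range (G.verts.card + 1) := fun M hM =>
    Finset.mem_range_succ_iff.2
      ((Nat.le_mul_of_pos_left _ hr).trans (mul_card_le_of_mem_matchings hwf hun hM))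
  rw [← Finset.sum_fiberwise_of_maps_to hmaps]
  refine Finset.sum_congr rfl fun k _ => ?_
  have hcount : (G.matchings.filter (fun M => M.card = k)).card = G.matchCount k := by
    simp only [matchings, matchCount, Finset.filter_filter, and_comm]
  rw [Finset.sum_congr rfl fun M hM => by rw [(Finset.mem_filter.1 hM).2], Finset.sum_const,
    hcount, nsmul_eq_mul]
  ring

end MatchingSum

section EdgesThroughVertex

variable {G : FinHypergraph α} {r : ℕ}

theorem WellFormed.deleteEdges (hG : G.WellFormed) (F : Finset (Finset α)) :
    (G.deleteEdges F).WellFormed := fun e he => hG e (Finset.mem_sdiff.1 he).1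

theorem Uniform.deleteEdges (hG : G.Uniform r) (F : Finset (Finset α)) :
    (G.deleteEdges F).Uniform r := fun e he => hG e (Finset.mem_sdiff.1 he).1

theorem matchings_deleteEdges (F : Finset (Finset α)) :
    (G.deleteEdges F).matchings = G.matchings.filter (fun M => Disjoint M F) := by
  ext M
  simp only [mem_matchings, Finset.mem_filter, deleteEdges, Finset.subset_sdiff]
  tauto

theorem sum_matchings_filter_mem {γ : Type*} [AddCommMonoid γ] (g : ℕ → γ) {e : Finset α}
    (he : e ∈ G.edges) (hne : e.Nonempty) :
    ∑ M ∈ G.matchings.filter (e ∈ ·), g M.card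
      = ∑ A ∈ (G.removeVerts e).matchings, g (A.card + 1) := by
  refine Finset.sum_bij' (fun M _ => M.erase e) (fun A _ => insert e A) ?_ ?_ ?_ ?_ ?_
  · intro M hM
    obtain ⟨⟨hME, hMm⟩, heM⟩ := And.imp_left mem_matchings.1 (Finset.mem_filter.1 hM)
    refine mem_matchings.2 ⟨fun f hf => mem_removeVerts_edges.2 ⟨hME (Finset.mem_of_mem_erase hf),
      hMm f (Finset.mem_of_mem_erase hf) e heM (Finset.ne_of_mem_erase hf)⟩,
      hMm.mono (Finset.erase_subset e M)⟩
  · intro A hA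
    obtain ⟨hAE, hAm⟩ := mem_matchings.1 hA
    have hAe : ∀ f ∈ A, Disjoint f e := fun f hf => (mem_removeVerts_edges.1 (hAE hf)).2
    refine Finset.mem_filter.2 ⟨mem_matchings.2 ⟨Finset.insert_subset he fun f hf =>
      (mem_removeVerts_edges.1 (hAE hf)).1, ?_⟩, Finset.mem_insert_self e A⟩
    intro f hf f' hf' hff'
    rcases Finset.mem_insert.1 hf with hfe | hf <;> rcases Finset.mem_insert.1 hf' with hf'e | hf'
    · exact absurd (hfe.trans hf'e.symm) hff'
    · exact hfe ▸ (hAe f' hf').symm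
    · exact hf'e ▸ hAe f hf
    · exact hAm f hf f' hf' hff'
  · intro M hM
    exact Finset.insert_erase (Finset.mem_filter.1 hM).2
  · intro A hA
    refine Finset.erase_insert fun heA => hne.ne_empty ?_
    exact disjoint_self.1 (mem_removeVerts_edges.1 ((mem_matchings.1 hA).1 heA)).2
  · intro M hM
    rw [Finset.card_erase_add_one (Finset.mem_filter.1 hM).2]

/-- A matching of `G` either avoids `F` or contains exactly one `e ∈ F` (all of them pass through
`u`), and is then `e` together with a matching of `G − V(e)`. -/
theorem matchPoly_eq_deleteEdges_sub (hr : 1 ≤ r) (hwf : G.WellFormed) (hun : G.Uniform r)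
    {u : α} {F : Finset (Finset α)} (hF : F ⊆ G.edges) (hFu : ∀ e ∈ F, u ∈ e) (x : ℝ) :
    G.matchPoly r x
      = (G.deleteEdges F).matchPoly r x - ∑ e ∈ F, (G.removeVerts e).matchPoly r x := by
  set n := G.verts.card
  set g : ℕ → ℝ := fun k => (-1 : ℝ) ^ k * x ^ (n - r * k)
  have hcover : G.matchings.filter (fun M => ¬ Disjoint M F)
      = F.biUnion (fun e => G.matchings.filter (e ∈ ·)) := by
    ext M
    simp only [Finset.mem_filter, Finset.mem_biUnion, Finset.not_disjoint_iff]
    constructor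
    · rintro ⟨hM, e, heM, heF⟩
      exact ⟨e, heF, hM, heM⟩
    · rintro ⟨e, heF, hM, heM⟩
      exact ⟨hM, e, heM, heF⟩
  have hdisj : (F : Set (Finset α)).PairwiseDisjoint (fun e => G.matchings.filter (e ∈ ·)) := by
    intro e he e' he' hne
    refine Finset.disjoint_left.2 fun M hM hM' => ?_
    have hMm := (mem_matchings.1 (Finset.mem_filter.1 hM).1).2
    exact Finset.disjoint_left.1 (hMm e (Finset.mem_filter.1 hM).2 e'
      (Finset.mem_filter.1 hM').2 hne) (hFu e he) (hFu e' he')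
  have hthrough : ∀ e ∈ F, ∑ M ∈ G.matchings.filter (e ∈ ·), g M.card
      = -(G.removeVerts e).matchPoly r x := by
    intro e he
    have hcard : (G.removeVerts e).verts.card = n - r := by
      rw [card_removeVerts_verts (hwf e (hF he)), hun e (hF he)]
    have hne : e.Nonempty := Finset.card_pos.1 (by rw [hun e (hF he)]; omega)
    rw [sum_matchings_filter_mem g (hF he) hne,
      matchPoly_eq_sum_matchings hr (hwf.removeVerts e) (hun.removeVerts e), hcard,
      ← Finset.sum_neg_distrib]
    refine Finset.sum_congr rfl fun A _ => ?_
    simp only [g, show n - r * (A.card + 1) = n - r - r * A.card by rw [Nat.mul_succ]; omega]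
    ring
  rw [matchPoly_eq_sum_matchings hr hwf hun,
    matchPoly_eq_sum_matchings hr (hwf.deleteEdges F) (hun.deleteEdges F),
    matchings_deleteEdges, ← Finset.sum_filter_add_sum_filter_not G.matchings
      (fun M => Disjoint M F), hcover, Finset.sum_biUnion hdisj,
    Finset.sum_congr rfl hthrough, Finset.sum_neg_distrib, ← sub_eq_add_neg]
  rfl

end EdgesThroughVertex

section DisjointUnion

variable [DecidableEq α] {G₁ G₂ : FinHypergraph α} {r : ℕ}

theorem WellFormed.union (h₁ : G₁.WellFormed) (h₂ : G₂.WellFormed) : (G₁ ∪ G₂).WellFormed := by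
  intro e he
  rcases Finset.mem_union.1 he with he | he
  · exact (h₁ e he).trans Finset.subset_union_left
  · exact (h₂ e he).trans Finset.subset_union_right

theorem Uniform.union (h₁ : G₁.Uniform r) (h₂ : G₂.Uniform r) : (G₁ ∪ G₂).Uniform r := by
  intro e he
  rcases Finset.mem_union.1 he with he | he
  exacts [h₁ e he, h₂ e he]

theorem IsMatchingSet.union {A B : Finset (Finset α)} (hA : IsMatchingSet A)
    (hB : IsMatchingSet B) (hAB : ∀ e ∈ A, ∀ f ∈ B, Disjoint e f) : IsMatchingSet (A ∪ B) := by
  intro e he f hf hef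
  rcases Finset.mem_union.1 he with he | he <;> rcases Finset.mem_union.1 hf with hf | hf
  · exact hA e he f hf hef
  · exact hAB e he f hf
  · exact (hAB f hf e he).symm
  · exact hB e he f hf hef

theorem filter_mem_matchings {M : Finset (Finset α)} (hM : IsMatchingSet M)
    (G : FinHypergraph α) : M.filter (· ∈ G.edges) ∈ G.matchings :=
  mem_matchings.2 ⟨fun _ he => (Finset.mem_filter.1 he).2, hM.mono (Finset.filter_subset _ _)⟩

theorem sum_matchings_union {γ : Type*} [AddCommMonoid γ] (g : Finset (Finset α) → γ)
    (hwf₁ : G₁.WellFormed) (hwf₂ : G₂.WellFormed) (hV : Disjoint G₁.verts G₂.verts)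
    (hE : Disjoint G₁.edges G₂.edges) :
    ∑ M ∈ (G₁ ∪ G₂).matchings, g M = ∑ p ∈ G₁.matchings ×ˢ G₂.matchings, g (p.1 ∪ p.2) := by
  symm
  refine Finset.sum_bij' (fun p _ => p.1 ∪ p.2)
    (fun M _ => (M.filter (· ∈ G₁.edges), M.filter (· ∈ G₂.edges))) ?_ ?_ ?_ ?_ ?_
  · rintro ⟨A, B⟩ hAB
    obtain ⟨⟨hAE, hAm⟩, ⟨hBE, hBm⟩⟩ :=
      And.imp mem_matchings.1 mem_matchings.1 (Finset.mem_product.1 hAB)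
    exact mem_matchings.2 ⟨Finset.union_subset_union hAE hBE,
      hAm.union hBm fun e he f hf => hV.mono (hwf₁ e (hAE he)) (hwf₂ f (hBE hf))⟩
  · intro M hM
    have hMm := (mem_matchings.1 hM).2
    exact Finset.mem_product.2 ⟨filter_mem_matchings hMm G₁, filter_mem_matchings hMm G₂⟩
  · rintro ⟨A, B⟩ hAB
    obtain ⟨hAE, hBE⟩ : A ⊆ G₁.edges ∧ B ⊆ G₂.edges :=
      And.imp (fun h => (mem_matchings.1 h).1) (fun h => (mem_matchings.1 h).1)
        (Finset.mem_product.1 hAB)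
    simp only [Finset.filter_union, Prod.mk.injEq]
    rw [Finset.filter_true_of_mem fun e he => hAE he,
      Finset.filter_false_of_mem fun e he => Finset.disjoint_right.1 hE (hBE he),
      Finset.filter_false_of_mem fun e he => Finset.disjoint_left.1 hE (hAE he),
      Finset.filter_true_of_mem fun e he => hBE he, Finset.union_empty, Finset.empty_union]
    exact ⟨rfl, rfl⟩
  · intro M hM
    rw [Finset.filter_union_right]
    exact Finset.filter_true_of_mem fun e he => Finset.mem_union.1 ((mem_matchings.1 hM).1 he)
  · intro _ _
    rfl

theorem matchPoly_union_of_disjoint (hr : 1 ≤ r) (hwf₁ : G₁.WellFormed) (hun₁ : G₁.Uniform r)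
    (hwf₂ : G₂.WellFormed) (hun₂ : G₂.Uniform r) (hV : Disjoint G₁.verts G₂.verts) (x : ℝ) :
    (G₁ ∪ G₂).matchPoly r x = G₁.matchPoly r x * G₂.matchPoly r x := by
  -- edges are nonempty, so an edge of both would lie in `G₁.verts ∩ G₂.verts = ∅`
  have hE : Disjoint G₁.edges G₂.edges := by
    refine Finset.disjoint_left.2 fun e he₁ he₂ => ?_
    have hne : e.Nonempty := Finset.card_pos.1 (by rw [hun₁ e he₁]; omega)
    exact hne.ne_empty (disjoint_self.1 (hV.mono (hwf₁ e he₁) (hwf₂ e he₂)))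
  rw [matchPoly_eq_sum_matchings hr (hwf₁.union hwf₂) (hun₁.union hun₂),
    matchPoly_eq_sum_matchings hr hwf₁ hun₁, matchPoly_eq_sum_matchings hr hwf₂ hun₂,
    Finset.sum_mul_sum, ← Finset.sum_product', union_verts, Finset.card_union_of_disjoint hV,
    sum_matchings_union _ hwf₁ hwf₂ hV hE]
  refine Finset.sum_congr rfl fun ⟨A, B⟩ hAB => ?_
  obtain ⟨hA, hB⟩ : A ∈ G₁.matchings ∧ B ∈ G₂.matchings := Finset.mem_product.1 hAB
  have hAB : Disjoint A B := Finset.disjoint_left.2 fun e heA heB =>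
    Finset.disjoint_left.1 hE ((mem_matchings.1 hA).1 heA) ((mem_matchings.1 hB).1 heB)
  have hbA := mul_card_le_of_mem_matchings hwf₁ hun₁ hA
  have hbB := mul_card_le_of_mem_matchings hwf₂ hun₂ hB
  rw [Finset.card_union_of_disjoint hAB, mul_add,
    show G₁.verts.card + G₂.verts.card - (r * A.card + r * B.card)
      = (G₁.verts.card - r * A.card) + (G₂.verts.card - r * B.card) by omega]
  ring

end DisjointUnion

section Map

variable [DecidableEq β] {G : FinHypergraph α} {f : α → β}

theorem WellFormed.map (hG : G.WellFormed) (f : α → β) : (G.map f).WellFormed := by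
  intro e he
  obtain ⟨e', he', rfl⟩ := Finset.mem_image.1 he
  exact Finset.image_subset_image (hG e' he')

theorem image_injOn_edges (hwf : G.WellFormed) (hf : Set.InjOn f G.verts) :
    Set.InjOn (Finset.image f) G.edges :=
  hf.finset_image.mono fun e he => Finset.coe_subset.2 (hwf e he)

theorem Uniform.map {r : ℕ} (hwf : G.WellFormed) (hun : G.Uniform r)
    (hf : Set.InjOn f G.verts) : (G.map f).Uniform r := by
  intro e he
  obtain ⟨e', he', rfl⟩ := Finset.mem_image.1 he
  rw [Finset.card_image_of_injOn (hf.mono (Finset.coe_subset.2 (hwf e' he'))), hun e' he']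

theorem isMatchingSet_image_iff (hwf : G.WellFormed) (hf : Set.InjOn f G.verts)
    {M : Finset (Finset α)} (hM : M ⊆ G.edges) :
    IsMatchingSet (M.image (Finset.image f)) ↔ IsMatchingSet M := by
  have hdisj : ∀ e ∈ M, ∀ e' ∈ M, Disjoint (e.image f) (e'.image f) ↔ Disjoint e e' :=
    fun e he e' he' => Finset.disjoint_image_iff_of_injOn
      (hf.mono (Finset.coe_subset.2 (Finset.union_subset (hwf e (hM he)) (hwf e' (hM he')))))
  have hinj := image_injOn_edges hwf hf
  constructor
  · intro h e he e' he' hne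
    exact (hdisj e he e' he').1 (h _ (Finset.mem_image_of_mem _ he) _
      (Finset.mem_image_of_mem _ he') fun heq => hne (hinj (hM he) (hM he') heq))
  · intro h g hg g' hg' hne
    obtain ⟨e, he, rfl⟩ := Finset.mem_image.1 hg
    obtain ⟨e', he', rfl⟩ := Finset.mem_image.1 hg'
    exact (hdisj e he e' he').2 (h e he e' he' fun heq => hne (heq ▸ rfl))

theorem matchCount_map (hwf : G.WellFormed) (hf : Set.InjOn f G.verts) (k : ℕ) :
    (G.map f).matchCount k = G.matchCount k := by
  have hinj := image_injOn_edges hwf hf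
  unfold matchCount
  rw [map, Finset.powerset_image, Finset.filter_image, Finset.card_image_of_injOn]
  · refine congrArg Finset.card (Finset.filter_congr fun M hM => ?_)
    have hME := Finset.mem_powerset.1 hM
    rw [Finset.card_image_of_injOn (hinj.mono (Finset.coe_subset.2 hME)),
      isMatchingSet_image_iff hwf hf hME]
  · intro M hM M' hM' h
    exact hinj.finset_image (Finset.coe_subset.2 (Finset.mem_powerset.1 (Finset.mem_filter.1 hM).1))
      (Finset.coe_subset.2 (Finset.mem_powerset.1 (Finset.mem_filter.1 hM').1)) (by convert h)

theorem matchPoly_map (hwf : G.WellFormed) (hf : Set.InjOn f G.verts) (r : ℕ) (x : ℝ) :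
    (G.map f).matchPoly r x = G.matchPoly r x := by
  have hcard : (G.map f).verts.card = G.verts.card := Finset.card_image_of_injOn hf
  simp only [matchPoly, hcard, matchCount_map hwf hf]

theorem map_removeVerts (hwf : G.WellFormed) (hf : Set.InjOn f G.verts) {S : Finset α}
    (hS : S ⊆ G.verts) : (G.removeVerts S).map f = (G.map f).removeVerts (S.image f) := by
  ext1
  · simp only [map, removeVerts]
    convert Finset.image_sdiff_of_injOn hf hS
  · ext e
    simp only [map, mem_removeVerts_edges, Finset.mem_image]
    constructor
    · rintro ⟨e', ⟨he', hdisj⟩, rfl⟩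
      exact ⟨⟨e', he', rfl⟩, (Finset.disjoint_image_iff_of_injOn
        (hf.mono (Finset.coe_subset.2 (Finset.union_subset (hwf e' he') hS)))).2 hdisj⟩
    · rintro ⟨⟨e', he', rfl⟩, hdisj⟩
      exact ⟨e', ⟨he', (Finset.disjoint_image_iff_of_injOn
        (hf.mono (Finset.coe_subset.2 (Finset.union_subset (hwf e' he') hS)))).1 hdisj⟩, rfl⟩

end Map

section Gluing

variable [DecidableEq α] {G₁ G₂ : FinHypergraph α} {r : ℕ} {u : α}

theorem union_deleteEdges_filter_mem (hr : 2 ≤ r) (hwf₁ : G₁.WellFormed) (hun₁ : G₁.Uniform r)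
    (hwf₂ : G₂.WellFormed) (hV : G₁.verts ∩ G₂.verts = {u}) :
    (G₁ ∪ G₂).deleteEdges (G₁.edges.filter (u ∈ ·)) = G₁.removeVerts {u} ∪ G₂ := by
  have hu₂ : u ∈ G₂.verts := (Finset.mem_inter.1 (hV ▸ Finset.mem_singleton_self u)).2
  -- an edge of `G₂` through `u` would lie in `G₁.verts ∩ G₂.verts = {u}`, which is too small
  have hnot₂ : ∀ e ∈ G₁.edges, u ∈ e → e ∉ G₂.edges := by
    intro e he _ he₂
    have hsub : e ⊆ {u} := hV ▸ Finset.subset_inter (hwf₁ e he) (hwf₂ e he₂)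
    have := Finset.card_le_card hsub
    rw [hun₁ e he, Finset.card_singleton] at this
    omega
  ext1
  · ext v
    simp only [deleteEdges, union_verts, Finset.mem_union, mem_removeVerts_verts,
      Finset.mem_singleton]
    by_cases hvu : v = u
    · simp [hvu, hu₂]
    · simp [hvu]
  · ext e
    simp only [deleteEdges, union_edges, Finset.mem_union, Finset.mem_sdiff,
      mem_removeVerts_edges, Finset.mem_filter, Finset.disjoint_singleton_right]
    have := hnot₂ e
    tauto

theorem union_removeVerts_of_inter_eq_singleton (hwf₂ : G₂.WellFormed)
    (hV : G₁.verts ∩ G₂.verts = {u}) {e : Finset α} (he : e ⊆ G₁.verts) (hue : u ∈ e) :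
    (G₁ ∪ G₂).removeVerts e = G₁.removeVerts e ∪ G₂.removeVerts {u} := by
  have hmem : ∀ v ∈ G₂.verts, v ∈ e ↔ v = u := fun v hv =>
    ⟨fun hve => Finset.mem_singleton.1 (hV ▸ Finset.mem_inter.2 ⟨he hve, hv⟩),
      fun hvu => hvu ▸ hue⟩
  ext1
  · ext v
    simp only [union_verts, Finset.mem_union, mem_removeVerts_verts, Finset.mem_singleton]
    have := hmem v
    tauto
  · ext f
    simp only [union_edges, Finset.mem_union, mem_removeVerts_edges, or_and_right]
    refine or_congr Iff.rfl (and_congr_right fun hf => ?_)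
    simp only [Finset.disjoint_right, Finset.mem_singleton, forall_eq]
    exact ⟨fun h hf' => h hue hf', fun h v hve hvf => h ((hmem v (hwf₂ f hf hvf)).1 hve ▸ hvf)⟩

theorem matchPoly_union_of_inter_eq_singleton (hr : 2 ≤ r) (hwf₁ : G₁.WellFormed)
    (hun₁ : G₁.Uniform r) (hwf₂ : G₂.WellFormed) (hun₂ : G₂.Uniform r)
    (hV : G₁.verts ∩ G₂.verts = {u}) (x : ℝ) :
    (G₁ ∪ G₂).matchPoly r x
      = G₂.matchPoly r x * (G₁.removeVerts {u}).matchPoly r x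
        - (G₂.removeVerts {u}).matchPoly r x *
            ∑ e ∈ G₁.edges.filter (u ∈ ·), (G₁.removeVerts e).matchPoly r x := by
  have hcommon : ∀ v ∈ G₁.verts, v ∈ G₂.verts → v = u := fun v h₁ h₂ =>
    Finset.mem_singleton.1 (hV ▸ Finset.mem_inter.2 ⟨h₁, h₂⟩)
  have hsplit : ∀ e ∈ G₁.edges.filter (u ∈ ·), ((G₁ ∪ G₂).removeVerts e).matchPoly r x
      = (G₁.removeVerts e).matchPoly r x * (G₂.removeVerts {u}).matchPoly r x := by
    intro e he
    obtain ⟨he, hue⟩ := Finset.mem_filter.1 he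
    rw [union_removeVerts_of_inter_eq_singleton hwf₂ hV (hwf₁ e he) hue]
    refine matchPoly_union_of_disjoint (by omega) (hwf₁.removeVerts _) (hun₁.removeVerts _)
      (hwf₂.removeVerts _) (hun₂.removeVerts _) (Finset.disjoint_left.2 fun v hv₁ hv₂ => ?_) x
    exact (mem_removeVerts_verts.1 hv₂).2 (Finset.mem_singleton.2
      (hcommon v (mem_removeVerts_verts.1 hv₁).1 (mem_removeVerts_verts.1 hv₂).1))
  have hdisj : Disjoint (G₁.removeVerts {u}).verts G₂.verts :=
    Finset.disjoint_left.2 fun v hv₁ hv₂ => (mem_removeVerts_verts.1 hv₁).2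
      (Finset.mem_singleton.2 (hcommon v (mem_removeVerts_verts.1 hv₁).1 hv₂))
  rw [matchPoly_eq_deleteEdges_sub (by omega) (hwf₁.union hwf₂) (hun₁.union hun₂)
      ((Finset.filter_subset (u ∈ ·) _).trans Finset.subset_union_left)
      (fun e he => (Finset.mem_filter.1 he).2),
    union_deleteEdges_filter_mem hr hwf₁ hun₁ hwf₂ hV,
    matchPoly_union_of_disjoint (by omega) (hwf₁.removeVerts _) (hun₁.removeVerts _) hwf₂ hun₂
      hdisj, Finset.sum_congr rfl hsplit, ← Finset.sum_mul]
  ring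

end Gluing


theorem matchPoly_edgeless (S : Finset α) (r : ℕ) (x : ℝ) :
    (edgeless S).matchPoly r x = x ^ S.card := by
  have hcount : ∀ k, (edgeless S).matchCount k = if k = 0 then 1 else 0 := by
    intro k
    simp only [matchCount, edgeless, Finset.powerset_empty, Finset.filter_singleton,
      Finset.card_empty, eq_comm (a := 0)]
    split_ifs with h₁ h₂ h₂ <;> simp_all [IsMatchingSet]
  rw [matchPoly, Finset.sum_eq_single 0 (fun k _ hk => by simp [hcount, hk])
    (fun h => absurd (Finset.mem_range.2 (Nat.succ_pos _)) h), hcount 0]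
  simp [edgeless]

section LoosePath

def loosePathEdge (r j : ℕ) : Finset ℕ := Finset.Icc (j * (r - 1)) ((j + 1) * (r - 1))

/-- `P_m^r` on the vertices `0, …, m(r-1)`; its joint vertex `v_j` is `(j - 1)(r - 1)`. -/
def loosePath (r m : ℕ) : FinHypergraph ℕ :=
  ⟨Finset.Icc 0 (m * (r - 1)), (Finset.range m).image (loosePathEdge r)⟩

theorem loosePath_wellFormed (r m : ℕ) : (loosePath r m).WellFormed := by
  intro e he
  obtain ⟨j, hj, rfl⟩ := Finset.mem_image.1 he
  exact Finset.Icc_subset_Icc (Nat.zero_le _) (Nat.mul_le_mul_right _ (Finset.mem_range.1 hj))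

theorem loosePath_uniform {r : ℕ} (hr : 1 ≤ r) (m : ℕ) : (loosePath r m).Uniform r := by
  intro e he
  obtain ⟨j, -, rfl⟩ := Finset.mem_image.1 he
  rw [loosePathEdge, Nat.card_Icc, add_mul, one_mul]
  omega

theorem disjoint_loosePathEdge_joint_iff {r : ℕ} (hr : 2 ≤ r) (j k : ℕ) :
    Disjoint (loosePathEdge r j) {(k + 1) * (r - 1)} ↔ j < k ∨ k + 2 ≤ j := by
  rw [Finset.disjoint_singleton_right, loosePathEdge, Finset.mem_Icc,
    Nat.mul_le_mul_right_iff (by omega), Nat.mul_le_mul_right_iff (by omega)]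
  omega

theorem image_add_loosePathEdge (r j a : ℕ) :
    (loosePathEdge r j).image (· + a * (r - 1)) = loosePathEdge r (j + a) := by
  rw [loosePathEdge, Finset.image_add_right_Icc, loosePathEdge, ← add_mul, add_right_comm,
    ← add_mul]

theorem loosePathEdges_eq_image (r m : ℕ) (w : ℕ → α) :
    loosePathEdges r m w = (loosePath r m).edges.image (Finset.image w) := by
  simp only [loosePathEdges, loosePath, Finset.image_image]
  rfl

theorem injOn_loosePath_verts {r m : ℕ} {w : ℕ → α}
    (hw : Set.InjOn w (Set.Iic (m * (r - 1)))) : Set.InjOn w (loosePath r m).verts :=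
  hw.mono fun _ ht => Set.mem_Iic.2 (Finset.mem_Icc.1 ht).2

theorem IsLoosePath.matchPoly_eq {r m : ℕ} {P : FinHypergraph α} (hP : IsLoosePath r m P)
    (x : ℝ) : P.matchPoly r x = (loosePath r m).matchPoly r x := by
  obtain ⟨w, hw, hv, he⟩ := hP
  have hPw : P = (loosePath r m).map w := ext hv (he.trans (loosePathEdges_eq_image r m w))
  rw [hPw, matchPoly_map (loosePath_wellFormed r m) (injOn_loosePath_verts hw)]

theorem loosePath_removeVerts_joint {r : ℕ} (hr : 2 ≤ r) (k l : ℕ) :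
    (loosePath r (k + l + 2)).removeVerts {(k + 1) * (r - 1)}
      = loosePath r k
        ∪ edgeless (Finset.Ioo (k * (r - 1)) ((k + 2) * (r - 1)) \ {(k + 1) * (r - 1)})
        ∪ (loosePath r l).map (· + (k + 2) * (r - 1)) := by
  ext1
  · have h₁ : (k + 1) * (r - 1) = k * (r - 1) + (r - 1) := by ring
    have h₂ : (k + 2) * (r - 1) = k * (r - 1) + 2 * (r - 1) := by ring
    have h₃ : (k + l + 2) * (r - 1) = k * (r - 1) + l * (r - 1) + 2 * (r - 1) := by ring
    ext t
    simp only [loosePath, edgeless, map, removeVerts, union_verts, Finset.image_add_right_Icc,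
      Finset.mem_union, Finset.mem_sdiff, Finset.mem_Icc, Finset.mem_Ioo, Finset.mem_singleton]
    omega
  · ext e
    simp only [loosePath, edgeless, map, removeVerts, union_edges, Finset.mem_union,
      Finset.mem_filter, Finset.mem_image, Finset.mem_range, Finset.notMem_empty, or_false]
    constructor
    · rintro ⟨⟨j, hj, rfl⟩, hdisj⟩
      rcases (disjoint_loosePathEdge_joint_iff hr j k).1 hdisj with hjk | hjk
      · exact Or.inl ⟨j, hjk, rfl⟩
      · refine Or.inr ⟨_, ⟨j - (k + 2), by omega, rfl⟩, ?_⟩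
        rw [image_add_loosePathEdge, Nat.sub_add_cancel hjk]
    · rintro (⟨j, hj, rfl⟩ | ⟨_, ⟨j, hj, rfl⟩, rfl⟩)
      · exact ⟨⟨j, by omega, rfl⟩, (disjoint_loosePathEdge_joint_iff hr j k).2 (Or.inl hj)⟩
      · rw [image_add_loosePathEdge]
        exact ⟨⟨_, by omega, rfl⟩, (disjoint_loosePathEdge_joint_iff hr _ k).2 (Or.inr (by omega))⟩

theorem matchPoly_loosePath_removeVerts_joint {r : ℕ} (hr : 2 ≤ r) (k l : ℕ) (x : ℝ) :
    ((loosePath r (k + l + 2)).removeVerts {(k + 1) * (r - 1)}).matchPoly r x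
      = x ^ (2 * r - 4) * (loosePath r k).matchPoly r x * (loosePath r l).matchPoly r x := by
  set I := Finset.Ioo (k * (r - 1)) ((k + 2) * (r - 1)) \ {(k + 1) * (r - 1)} with hI
  have h₁ : (k + 1) * (r - 1) = k * (r - 1) + (r - 1) := by ring
  have h₂ : (k + 2) * (r - 1) = k * (r - 1) + 2 * (r - 1) := by ring
  have hshift : Set.InjOn (· + (k + 2) * (r - 1)) (loosePath r l).verts :=
    (add_left_injective _).injOn
  have hwfI : (edgeless I).WellFormed := by simp [WellFormed, edgeless]
  have hunI : (edgeless I).Uniform r := by simp [Uniform, edgeless]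
  have hcard : I.card = 2 * r - 4 := by
    rw [hI, Finset.card_sdiff_of_subset
        (Finset.singleton_subset_iff.2 (Finset.mem_Ioo.2 (by omega))),
      Nat.card_Ioo, Finset.card_singleton]
    omega
  rw [loosePath_removeVerts_joint hr k l,
    matchPoly_union_of_disjoint (by omega) ((loosePath_wellFormed r k).union hwfI)
      ((loosePath_uniform (by omega) k).union hunI) ((loosePath_wellFormed r l).map _)
      ((loosePath_uniform (by omega) l).map (loosePath_wellFormed r l) hshift) ?_,
    matchPoly_union_of_disjoint (by omega) (loosePath_wellFormed r k)
      (loosePath_uniform (by omega) k) hwfI hunI ?_,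
    matchPoly_edgeless, hcard, matchPoly_map (loosePath_wellFormed r l) hshift]
  · ring
  · refine Finset.disjoint_left.2 fun t ht ht' => ?_
    simp only [hI, loosePath, edgeless, Finset.mem_sdiff, Finset.mem_Icc, Finset.mem_Ioo] at ht ht'
    omega
  · refine Finset.disjoint_left.2 fun t ht ht' => ?_
    simp only [hI, loosePath, edgeless, map, union_verts, Finset.image_add_right_Icc,
      Finset.mem_union, Finset.mem_sdiff, Finset.mem_Icc, Finset.mem_Ioo,
      Finset.mem_singleton] at ht ht'
    omega

theorem IsPathIdentify.exists_eq_union {r d c : ℕ} {H T : FinHypergraph α} {u : α}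
    (hT : IsPathIdentify r d c H u T) (hc : c ≤ d * (r - 1)) (hu : u ∈ H.verts) :
    ∃ w : ℕ → α, Set.InjOn w (loosePath r d).verts ∧ w c = u ∧ T = H ∪ (loosePath r d).map w ∧
      H.verts ∩ ((loosePath r d).map w).verts = {u} := by
  obtain ⟨w, hw, hwc, hnew, hv, he⟩ := hT
  refine ⟨w, injOn_loosePath_verts hw, hwc, ext hv (he.trans ?_), ?_⟩
  · rw [loosePathEdges_eq_image]
    rfl
  · ext v
    simp only [map, loosePath, Finset.mem_inter, Finset.mem_image, Finset.mem_Icc,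
      Finset.mem_singleton]
    constructor
    · rintro ⟨hvH, t, ⟨-, ht⟩, rfl⟩
      by_contra htc
      exact hnew t ht (fun h => htc (h ▸ hwc)) hvH
    · rintro rfl
      exact ⟨hu, c, ⟨Nat.zero_le c, hc⟩, hwc⟩

end LoosePath

end FinHypergraph

open FinHypergraph

theorem matchPoly_path_joint_identify_general {α : Type*} (r d : ℕ) (hr : 3 ≤ r)
    (H : FinHypergraph α) (hH : H.IsSupertree r) (u : α) (hu : u ∈ H.verts)
    (i : ℕ) (hi2 : 2 ≤ i) (hid : i ≤ d)
    (T Pd P1 P2 : FinHypergraph α)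
    (hT : IsPathIdentify r d ((i - 1) * (r - 1)) H u T)
    (hPd : IsLoosePath r d Pd)
    (hP1 : IsLoosePath r (i - 2) P1) (hP2 : IsLoosePath r (d - i) P2) :
    ∀ x : ℝ, T.matchPoly r x
      = Pd.matchPoly r x * (H.removeVerts {u}).matchPoly r x
        - x ^ (2 * r - 4) * P1.matchPoly r x * P2.matchPoly r x *
            ∑ e ∈ H.edges.filter (fun e => u ∈ e), (H.removeVerts e).matchPoly r x := by
  intro x
  obtain ⟨hwf, hun, -, -⟩ := hH
  obtain ⟨k, rfl⟩ : ∃ k, i = k + 2 := ⟨i - 2, by omega⟩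
  obtain ⟨l, rfl⟩ : ∃ l, d = k + l + 2 := ⟨d - (k + 2), by omega⟩
  rw [show k + 2 - 1 = k + 1 by omega] at hT
  rw [show k + 2 - 2 = k by omega] at hP1
  rw [show k + l + 2 - (k + 2) = l by omega] at hP2
  have hc : (k + 1) * (r - 1) ≤ (k + l + 2) * (r - 1) := Nat.mul_le_mul_right _ (by omega)
  obtain ⟨w, hw, hwc, rfl, hcap⟩ := hT.exists_eq_union hc hu
  have hjoint : (((loosePath r (k + l + 2)).map w).removeVerts {u}).matchPoly r x
      = x ^ (2 * r - 4) * (loosePath r k).matchPoly r x * (loosePath r l).matchPoly r x := by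
    rw [← hwc, ← Finset.image_singleton, ← map_removeVerts (loosePath_wellFormed _ _) hw
        (Finset.singleton_subset_iff.2 (Finset.mem_Icc.2 ⟨Nat.zero_le _, hc⟩)),
      matchPoly_map ((loosePath_wellFormed _ _).removeVerts _)
        (hw.mono fun _ ht => (mem_removeVerts_verts.1 ht).1),
      matchPoly_loosePath_removeVerts_joint (by omega)]
  rw [matchPoly_union_of_inter_eq_singleton (by omega) hwf hun ((loosePath_wellFormed _ _).map w)
      ((loosePath_uniform (by omega) _).map (loosePath_wellFormed _ _) hw) hcap, hjoint,
    matchPoly_map (loosePath_wellFormed _ _) hw,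
    hPd.matchPoly_eq, hP1.matchPoly_eq, hP2.matchPoly_eq]

/-- For `r ≥ 3`, `d ≥ 3`, an `r`-uniform supertree `H` with a vertex
`u`, and `2 ≤ i ≤ d`, the hypergraph `P_d^r(v_i,u)H` obtained by identifying the joint
vertex `v_i` of the loose path `P_d^r` with `u` satisfies
`φ(P_d^r(v_i,u)H, x) = φ(P_d^r,x)·φ(H−u,x)
  − x^(2r−4)·φ(P_{i−2}^r,x)·φ(P_{d−i}^r,x)·Σ_{e ∈ E_u(H)} φ(H−V(e),x)`. -/
theorem matchPoly_path_joint_identify {α : Type*} (r d : ℕ) (hr : 3 ≤ r) (hd : 3 ≤ d)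
    (H : FinHypergraph α) (hH : H.IsSupertree r) (u : α) (hu : u ∈ H.verts)
    (i : ℕ) (hi2 : 2 ≤ i) (hid : i ≤ d)
    (T Pd P1 P2 : FinHypergraph α)
    (hT : IsPathIdentify r d ((i - 1) * (r - 1)) H u T)
    (hPd : IsLoosePath r d Pd)
    (hP1 : IsLoosePath r (i - 2) P1) (hP2 : IsLoosePath r (d - i) P2) :
    ∀ x : ℝ, T.matchPoly r x
      = Pd.matchPoly r x * (H.removeVerts {u}).matchPoly r x
        - x ^ (2 * r - 4) * P1.matchPoly r x * P2.matchPoly r x *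
            ∑ e ∈ H.edges.filter (fun e => u ∈ e), (H.removeVerts e).matchPoly r x :=
  matchPoly_path_joint_identify_general r d hr H hH u hu i hi2 hid T Pd P1 P2 hT hPd hP1 hP2
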